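/- arXiv:1911.10705 — 2 statements merged into one kernel-verified Lean document; each statement's English description precedes it below -/
import Mathlib

section
/- For every natural number n ≥ 1, the Lucas number L_{2n+1} has base-phi expansion 1(01)^n·(01)^n; precisely, the function d : ℤ → ℕ defined by d(i) = 1 if i is even and −2n ≤ i ≤ 2n, and d(i) = 0 otherwise, is a base-phi expansion of L_{2n+1} (in particular ∑_{k=0}^{n} φ^{2k} + ∑_{k=1}^{n} φ^{−2k} = L_{2n+1}). -/
/-- The golden mean φ = (1+√5)/2. -/
noncomputable def phi : ℝ := (1 + Real.sqrt 5) / 2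

/-- `d : ℤ → ℕ` is a base-phi expansion of `N`: finitely supported, digits at most 1,
no two consecutive digits equal 1, and `∑ d i * φ^i = N`. -/
def IsBasePhi (N : ℕ) (d : ℤ → ℕ) : Prop :=
  {i : ℤ | d i ≠ 0}.Finite ∧ (∀ i, d i ≤ 1) ∧ (∀ i, d i * d (i + 1) = 0) ∧
    ∑' i : ℤ, (d i : ℝ) * phi ^ i = (N : ℝ)

/-- The Lucas numbers: L 0 = 2, L 1 = 1, L (n+2) = L (n+1) + L n. -/
def Lucas : ℕ → ℕ
  | 0 => 2
  | 1 => 1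
  | n + 2 => Lucas (n + 1) + Lucas n

noncomputable def psi : ℝ := (1 - Real.sqrt 5) / 2

lemma sq5 : Real.sqrt 5 ^ 2 = 5 := Real.sq_sqrt (by norm_num)

lemma phi_mul_psi : phi * psi = -1 := by
  have := sq5; unfold phi psi; nlinarith

lemma phi_pos : 0 < phi := by
  have : 0 < Real.sqrt 5 := Real.sqrt_pos.mpr (by norm_num)
  unfold phi; linarith

lemma key : ∀ m, phi ^ m + psi ^ m = (Lucas m : ℝ)
  | 0 => by norm_num [Lucas]
  | 1 => by unfold phi psi Lucas; push_cast; ring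
  | (m + 2) => by
    have h1 := key (m + 1)
    have h2 := key m
    have hp : phi ^ 2 = phi + 1 := by have := sq5; unfold phi; nlinarith
    have hq : psi ^ 2 = psi + 1 := by have := sq5; unfold psi; nlinarith
    have : phi ^ (m+2) + psi ^ (m+2) = (phi^(m+1) + psi^(m+1)) + (phi^m + psi^m) := by
      calc phi ^ (m+2) + psi ^ (m+2) = phi^m * phi^2 + psi^m * psi^2 := by ring
        _ = _ := by rw [hp, hq]; ring
    rw [this, h1, h2, Lucas]; push_cast; ring

lemma lucasSum : ∀ n, ∑ k ∈ Finset.range (n + 1), Lucas (2 * k) = Lucas (2 * n + 1) + 1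
  | 0 => by simp [Lucas]
  | (n + 1) => by
    rw [Finset.sum_range_succ, lucasSum n]
    have : 2 * (n + 1) + 1 = (2 * n + 1) + 2 := by ring
    rw [this, Lucas]
    have : 2 * (n + 1) = 2 * n + 2 := by ring
    rw [this, Lucas]
    omega

lemma inv_pow_even (k : ℕ) : (phi ^ (2 * k))⁻¹ = psi ^ (2 * k) := by
  have h : phi ^ (2 * k) * psi ^ (2 * k) = 1 := by
    rw [← mul_pow, phi_mul_psi]
    simp [pow_mul]
  exact inv_eq_of_mul_eq_one_right h

lemma sum_eq (n : ℕ) :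
    (∑ k ∈ Finset.range (n + 1), phi ^ (2 * k : ℤ)) +
      (∑ k ∈ Finset.Icc 1 n, phi ^ (-(2 * k : ℤ))) = (Lucas (2 * n + 1) : ℝ) := by
  have h1 : ∀ k : ℕ, phi ^ (2 * k : ℤ) = phi ^ (2 * k) := by
    intro k
    rw [show (2 * (k:ℤ)) = ((2 * k : ℕ) : ℤ) by push_cast; ring, zpow_natCast]
  have h2 : ∀ k : ℕ, phi ^ (-(2 * k : ℤ)) = psi ^ (2 * k) := by
    intro k
    rw [show (-(2 * (k:ℤ))) = -((2 * k : ℕ) : ℤ) by push_cast; ring, zpow_neg,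
      zpow_natCast, inv_pow_even]
  simp only [h1, h2]
  have hins : Finset.range (n + 1) = insert 0 (Finset.Icc 1 n) := by
    ext x; simp; omega
  have h0 : (0 : ℕ) ∉ Finset.Icc 1 n := by simp
  have hpsi : ∑ k ∈ Finset.Icc 1 n, psi ^ (2 * k)
      = ∑ k ∈ Finset.range (n + 1), psi ^ (2 * k) - 1 := by
    rw [hins, Finset.sum_insert h0]; simp
  rw [hpsi]
  have : ∑ k ∈ Finset.range (n+1), (phi ^ (2*k) + psi ^ (2*k))
      = ∑ k ∈ Finset.range (n+1), (Lucas (2*k) : ℝ) :=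
    Finset.sum_congr rfl fun k _ => key (2 * k)
  rw [show (∑ k ∈ Finset.range (n + 1), phi ^ (2 * k)) +
        ((∑ k ∈ Finset.range (n + 1), psi ^ (2 * k)) - 1)
      = (∑ k ∈ Finset.range (n+1), (phi ^ (2*k) + psi ^ (2*k))) - 1 by
    rw [Finset.sum_add_distrib]; ring]
  rw [this, ← Nat.cast_sum, lucasSum n]
  push_cast; ring

/-- For every `n ≥ 1`, the function with digit 1 at the even positions in `[-2n, 2n]`
and 0 elsewhere is a base-phi expansion of `L (2n+1)`; in particular
`∑_{k=0}^{n} φ^(2k) + ∑_{k=1}^{n} φ^(-2k) = L (2n+1)`. -/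
theorem lucas_odd_expansion (n : ℕ) (hn : 1 ≤ n) :
    IsBasePhi (Lucas (2 * n + 1))
      (fun i : ℤ => if Even i ∧ -(2 * n : ℤ) ≤ i ∧ i ≤ (2 * n : ℤ) then 1 else 0) ∧
    (∑ k ∈ Finset.range (n + 1), phi ^ (2 * k : ℤ)) +
      (∑ k ∈ Finset.Icc 1 n, phi ^ (-(2 * k : ℤ))) = (Lucas (2 * n + 1) : ℝ) := by
  set d : ℤ → ℕ := fun i : ℤ =>
    if Even i ∧ -(2 * n : ℤ) ≤ i ∧ i ≤ (2 * n : ℤ) then 1 else 0 with hd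
  refine ⟨⟨?_, ?_, ?_, ?_⟩, sum_eq n⟩
  · apply Set.Finite.subset (Finset.Icc (-(2 * n : ℤ)) (2 * n)).finite_toSet
    intro i hi
    simp only [hd, Set.mem_setOf_eq, ne_eq, ite_eq_right_iff, not_forall] at hi
    obtain ⟨⟨_, h1, h2⟩, _⟩ := hi
    simp [h1, h2]
  · intro i; simp only [hd]; split <;> simp
  · intro i
    simp only [hd]
    rcases Int.even_or_odd i with h | h
    · have h1 : ¬(Even (i + 1) ∧ -(2 * n : ℤ) ≤ i + 1 ∧ i + 1 ≤ (2 * n : ℤ)) :=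
        fun ⟨he, _⟩ => (Int.even_add_one.mp he) h
      rw [if_neg h1, mul_zero]
    · have h1 : ¬(Even i ∧ -(2 * n : ℤ) ≤ i ∧ i ≤ (2 * n : ℤ)) :=
        fun ⟨he, _⟩ => (Int.not_odd_iff_even.mpr he) h
      rw [if_neg h1, zero_mul]
  · set s : Finset ℤ := ((Finset.range (n + 1)).image fun k : ℕ => (2 * k : ℤ)) ∪
      ((Finset.Icc 1 n).image fun k : ℕ => (-(2 * k) : ℤ)) with hs
    have hvanish : ∀ i ∉ s, (d i : ℝ) * phi ^ i = 0 := by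
      intro i hi
      simp only [hs, Finset.mem_union, Finset.mem_image, Finset.mem_range,
        Finset.mem_Icc, not_or, not_exists, not_and] at hi
      suffices hdi : d i = 0 by simp [hdi]
      simp only [hd, ite_eq_right_iff]
      rintro ⟨⟨j, rfl⟩, hb1, hb2⟩
      exfalso
      rcases le_or_gt 0 j with hj | hj
      · exact absurd (by omega) (hi.1 j.toNat (by omega))
      · exact absurd (by omega) (hi.2 (-j).toNat ⟨by omega, by omega⟩)
    rw [tsum_eq_sum hvanish, hs]
    have hdisj : Disjoint ((Finset.range (n + 1)).image fun k : ℕ => (2 * k : ℤ))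
        ((Finset.Icc 1 n).image fun k : ℕ => (-(2 * k) : ℤ)) := by
      rw [Finset.disjoint_left]
      rintro a ha hb
      simp only [Finset.mem_image, Finset.mem_range, Finset.mem_Icc] at ha hb
      obtain ⟨k1, _, rfl⟩ := ha
      obtain ⟨k2, hk2, he⟩ := hb
      omega
    rw [Finset.sum_union hdisj,
      Finset.sum_image (by intro a _ b _ h; simp only at h; omega),
      Finset.sum_image (by intro a _ b _ h; simp only at h; omega)]
    rw [← sum_eq n]
    congr 1
    · apply Finset.sum_congr rfl
      intro k hk
      simp only [Finset.mem_range] at hk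
      have : d (2 * k) = 1 := by
        simp only [hd]
        exact if_pos ⟨⟨k, by ring⟩, by omega, by omega⟩
      rw [this]; simp
    · apply Finset.sum_congr rfl
      intro k hk
      simp only [Finset.mem_Icc] at hk
      have : d (-(2 * k)) = 1 := by
        simp only [hd]
        exact if_pos ⟨⟨-k, by ring⟩, by omega, by omega⟩
      rw [this]; simp
end

section
/- Every natural number N has a base-phi expansion, and this expansion is unique: if d and d' are both base-phi expansions of N, then d = d'. -/
set_option linter.unreachableTactic false
set_option linter.unusedTactic false

lemma one_lt_phi : 1 < phi := by
  have h : (1:ℝ) < Real.sqrt 5 := by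
    have := Real.sq_sqrt (by norm_num : (5:ℝ) ≥ 0)
    nlinarith [Real.sqrt_nonneg 5, Real.sq_sqrt (by norm_num : (0:ℝ) ≤ 5)]
  unfold phi; linarith

lemma phi_ne_zero : phi ≠ 0 := ne_of_gt phi_pos

lemma phi_sq : phi ^ 2 = phi + 1 := by
  have h : Real.sqrt 5 ^ 2 = 5 := Real.sq_sqrt (by norm_num)
  unfold phi; nlinarith [h]

lemma phi_zrec (a : ℤ) : phi ^ (a + 2) = phi ^ (a + 1) + phi ^ a := by
  have h1 : phi ^ (a + 2) = phi ^ a * phi ^ (2:ℤ) := by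
    rw [← zpow_add₀ phi_ne_zero]
  have h2 : phi ^ (a + 1) = phi ^ a * phi ^ (1:ℤ) := by
    rw [← zpow_add₀ phi_ne_zero]
  have h3 : phi ^ (2:ℤ) = phi + 1 := by
    rw [show (2:ℤ) = ((2:ℕ):ℤ) by norm_num, zpow_natCast, phi_sq]
  rw [h1, h2, h3, zpow_one]; ring

lemma zpow_phi_pos (i : ℤ) : 0 < phi ^ i := zpow_pos phi_pos i

lemma zpow_phi_mono {i j : ℤ} (h : i ≤ j) : phi ^ i ≤ phi ^ j :=
  zpow_le_zpow_right₀ (le_of_lt one_lt_phi) h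

def Good (S : Finset ℤ) : Prop := ∀ i ∈ S, i + 1 ∉ S
noncomputable def pval (S : Finset ℤ) : ℝ := ∑ i ∈ S, phi ^ i

lemma pval_lt (S : Finset ℤ) : Good S → ∀ m : ℤ, (∀ i ∈ S, i ≤ m) → pval S < phi ^ (m + 1) := by
  induction S using Finset.strongInduction with
  | _ S ih =>
    intro hg m hm
    rcases S.eq_empty_or_nonempty with rfl | hne
    · simpa [pval] using zpow_phi_pos (m+1)
    · set M := S.max' hne with hM
      have hMS : M ∈ S := S.max'_mem hne
      have hMm : M ≤ m := hm M hMS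
      have hsub : S.erase M ⊂ S := Finset.erase_ssubset hMS
      have hg' : Good (S.erase M) := fun i hi h => hg i (Finset.mem_of_mem_erase hi) (Finset.mem_of_mem_erase h)
      have hb : ∀ i ∈ S.erase M, i ≤ M - 2 := by
        intro i hi
        have hiS := Finset.mem_of_mem_erase hi
        have hile : i ≤ M := S.le_max' i hiS
        have hne1 : i ≠ M := Finset.ne_of_mem_erase hi
        have hne2 : i ≠ M - 1 := by
          intro h; apply hg i hiS; rw [h]; simpa using hMS
        omega
      have ihe := ih _ hsub hg' (M - 2) hb
      have hsum : pval S = phi ^ M + pval (S.erase M) := by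
        unfold pval; rw [← Finset.sum_erase_add S _ hMS]; ring
      have hrec : phi ^ (M + 1) = phi ^ M + phi ^ (M - 1) := by
        have := phi_zrec (M - 1)
        rw [show M - 1 + 2 = M + 1 by ring, show M - 1 + 1 = M by ring] at this
        exact this
      have : pval S < phi ^ (M + 1) := by
        rw [hsum, hrec]
        have : (M - 2) + 1 = M - 1 := by ring
        rw [this] at ihe
        linarith
      exact lt_of_lt_of_le this (zpow_phi_mono (by omega))

lemma psi_sq : psi ^ 2 = psi + 1 := by
  have h : Real.sqrt 5 ^ 2 = 5 := Real.sq_sqrt (by norm_num)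
  unfold psi; nlinarith [h]

lemma lucas_real : ∀ n : ℕ, (Lucas n : ℝ) = phi ^ n + psi ^ n := by
  intro n
  induction n using Nat.strong_induction_on with
  | _ n ih =>
    match n with
    | 0 => norm_num [Lucas]
    | 1 => show ((Lucas 1:ℕ):ℝ) = phi ^ 1 + psi ^ 1
           show ((1:ℕ):ℝ) = phi ^ 1 + psi ^ 1
           rw [pow_one, pow_one]
           unfold phi psi
           push_cast
           ring
    | n + 2 =>
      have h1 := ih (n+1) (by omega)
      have h0 := ih n (by omega)
      have : (Lucas (n+2) : ℝ) = (Lucas (n+1) : ℝ) + (Lucas n : ℝ) := by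
        rw [show Lucas (n+2) = Lucas (n+1) + Lucas n from rfl]; push_cast; ring
      rw [this, h1, h0]
      have hp : phi ^ (n+2) = phi ^ (n+1) + phi ^ n := by
        have : phi ^ (n+2) = phi ^ n * phi ^ 2 := by ring
        rw [this, phi_sq]; ring
      have hq : psi ^ (n+2) = psi ^ (n+1) + psi ^ n := by
        have : psi ^ (n+2) = psi ^ n * psi ^ 2 := by ring
        rw [this, psi_sq]; ring
      rw [hp, hq]; ring

lemma psi_eq : psi = -phi⁻¹ := by
  have h : phi * psi = -1 := by
    have h5 : Real.sqrt 5 ^ 2 = 5 := Real.sq_sqrt (by norm_num)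
    unfold phi psi; nlinarith [h5]
  have hne := phi_ne_zero
  field_simp
  linarith [h]

lemma lucas_even (n : ℕ) : (Lucas (2*n) : ℝ) = phi ^ (2*n : ℤ) + phi ^ (-(2*n : ℤ)) := by
  rw [lucas_real, psi_eq]
  rw [show (-phi⁻¹) ^ (2*n) = (phi⁻¹) ^ (2*n) by rw [neg_pow]; simp [pow_mul]]
  rw [← zpow_natCast phi (2*n), ← zpow_natCast phi⁻¹ (2*n), inv_zpow, ← zpow_neg]
  norm_num

lemma lucas_odd (n : ℕ) : (Lucas (2*n+1) : ℝ) = phi ^ (2*n+1 : ℤ) - phi ^ (-(2*n+1 : ℤ)) := by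
  rw [lucas_real, psi_eq]
  rw [show (-phi⁻¹) ^ (2*n+1) = -((phi⁻¹) ^ (2*n+1)) by rw [neg_pow]; simp [pow_mul, pow_succ]]
  rw [← zpow_natCast phi (2*n+1), ← zpow_natCast phi⁻¹ (2*n+1), inv_zpow, ← zpow_neg]
  push_cast
  ring

lemma phi_zrec' (a b c : ℤ) (h1 : b = a + 1) (h2 : c = a + 2) : phi ^ c = phi ^ b + phi ^ a := by
  subst h1; subst h2; exact phi_zrec a

lemma lucas_even' (m : ℕ) (a : ℤ) (h : a = 2*m) :
    (Lucas (2*m) : ℝ) = phi ^ a + phi ^ (-a) := by subst h; exact lucas_even m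

lemma lucas_odd' (m : ℕ) (a : ℤ) (h : a = 2*m+1) :
    (Lucas (2*m+1) : ℝ) = phi ^ a - phi ^ (-a) := by subst h; exact lucas_odd m

lemma insert_hi (S : Finset ℤ) (hg : Good S) (hi a : ℤ) (hb : ∀ i ∈ S, i ≤ hi) (ha : hi + 1 < a) :
    Good (insert a S) ∧ pval (insert a S) = phi ^ a + pval S := by
  have hna : a ∉ S := fun hc => by have := hb _ hc; omega
  constructor
  · intro i hiS
    rcases Finset.mem_insert.mp hiS with rfl | h
    · simp only [Finset.mem_insert]; push_neg
      exact ⟨by omega, fun hc => by have := hb _ hc; omega⟩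
    · simp only [Finset.mem_insert]; push_neg
      exact ⟨by have := hb _ h; omega, hg i h⟩
  · rw [pval, Finset.sum_insert hna]; rfl

lemma insert_lo (S : Finset ℤ) (hg : Good S) (lo a : ℤ) (hb : ∀ i ∈ S, lo ≤ i) (ha : a + 1 < lo) :
    Good (insert a S) ∧ pval (insert a S) = phi ^ a + pval S := by
  have hna : a ∉ S := fun hc => by have := hb _ hc; omega
  constructor
  · intro i hiS
    rcases Finset.mem_insert.mp hiS with rfl | h
    · simp only [Finset.mem_insert]; push_neg
      exact ⟨by omega, fun hc => by have := hb _ hc; omega⟩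
    · simp only [Finset.mem_insert]; push_neg
      exact ⟨by have := hb _ h; omega, hg i h⟩
  · rw [pval, Finset.sum_insert hna]; rfl

def EStmt (n : ℕ) : Prop := ∀ M : ℕ, M ≤ Lucas (2*n+1) → ∀ a : ℤ, a = 2*n →
  ∃ S : Finset ℤ, Good S ∧ (∀ i ∈ S, -a ≤ i ∧ i ≤ a) ∧ pval S = M

def OStmt (n : ℕ) : Prop := ∀ M : ℕ, 1 ≤ M → M < Lucas (2*n) → ∀ a : ℤ, a = 2*n →
  ∃ S : Finset ℤ, Good S ∧ (∀ i ∈ S, -a + 1 ≤ i ∧ i ≤ a - 1) ∧ pval S = M - phi ^ (-a)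

lemma phim1 : phi ^ (-1 : ℤ) = phi - 1 := by
  have h : phi * (phi - 1) = 1 := by nlinarith [phi_sq]
  rw [zpow_neg, zpow_one]
  exact inv_eq_of_mul_eq_one_right h

lemma phim2 : phi ^ (-2 : ℤ) = 2 - phi := by
  have h : phi ^ (2:ℤ) * (2 - phi) = 1 := by
    rw [show (2:ℤ) = ((2:ℕ):ℤ) by norm_num, zpow_natCast]; nlinarith [phi_sq]
  rw [zpow_neg]
  exact inv_eq_of_mul_eq_one_right h

lemma phip1 : phi ^ (1 : ℤ) = phi := zpow_one phi
lemma phip2 : phi ^ (2 : ℤ) = phi + 1 := by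
  rw [show (2:ℤ) = ((2:ℕ):ℤ) by norm_num, zpow_natCast, phi_sq]
lemma phip0 : phi ^ (0 : ℤ) = 1 := zpow_zero phi

lemma EO : ∀ n : ℕ, EStmt n ∧ OStmt n := by
  intro n
  induction n using Nat.strong_induction_on with
  | _ n ih =>
    match n with
    | 0 =>
      constructor
      · intro M hM a ha
        have ha0 : a = 0 := by simpa using ha
        subst ha0
        have hL : Lucas 1 = 1 := rfl
        rw [show 2*0+1 = 1 from rfl, hL] at hM
        interval_cases M
        · exact ⟨∅, by intro i hi; simp at hi, by intro i hi; simp at hi, by simp [pval]⟩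
        · refine ⟨{0}, ?_, ?_, ?_⟩
          · intro i hi; simp at hi; subst hi; simp
          · intro i hi; simp at hi; omega
          · simp [pval]
      · intro M h1 h2 a ha
        have ha0 : a = 0 := by simpa using ha
        subst ha0
        have hL : Lucas 0 = 2 := rfl
        rw [show 2*0 = 0 from rfl, hL] at h2
        interval_cases M
        refine ⟨∅, by intro i hi; simp at hi, by intro i hi; simp at hi, ?_⟩
        simp [pval]
    | 1 =>
      constructor
      · intro M hM a ha
        have ha2 : a = 2 := by simpa using ha
        subst ha2
        have hL : Lucas 3 = 4 := rfl
        rw [show 2*1+1 = 3 from rfl, hL] at hM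
        interval_cases M
        · exact ⟨∅, by intro i hi; simp at hi, by intro i hi; simp at hi, by simp [pval]⟩
        · refine ⟨{0}, ?_, ?_, ?_⟩
          · intro i hi; simp at hi; subst hi; simp
          · intro i hi; simp at hi; omega
          · simp [pval]
        · refine ⟨{-2, 1}, ?_, ?_, ?_⟩
          · intro i hi; simp at hi; rcases hi with rfl | rfl <;> simp <;> omega
          · intro i hi; simp at hi; rcases hi with rfl | rfl <;> omega
          · rw [pval, Finset.sum_insert (by simp), Finset.sum_singleton, phim2, phip1]
            push_cast; ring
        · refine ⟨{-2, 2}, ?_, ?_, ?_⟩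
          · intro i hi; simp at hi; rcases hi with rfl | rfl <;> simp <;> omega
          · intro i hi; simp at hi; rcases hi with rfl | rfl <;> omega
          · rw [pval, Finset.sum_insert (by simp), Finset.sum_singleton, phim2, phip2]
            push_cast; ring
        · refine ⟨{-2, 0, 2}, ?_, ?_, ?_⟩
          · intro i hi; simp at hi; rcases hi with rfl | rfl | rfl <;> simp <;> omega
          · intro i hi; simp at hi; rcases hi with rfl | rfl | rfl <;> omega
          · rw [pval, Finset.sum_insert (by simp), Finset.sum_insert (by simp),
              Finset.sum_singleton, phim2, phip2, phip0]
            push_cast; ring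
      · intro M h1 h2 a ha
        have ha2 : a = 2 := by simpa using ha
        subst ha2
        have hL : Lucas 2 = 3 := rfl
        rw [show 2*1 = 2 from rfl, hL] at h2
        interval_cases M
        · refine ⟨{-1}, ?_, ?_, ?_⟩
          · intro i hi; simp at hi; subst hi; simp
          · intro i hi; simp at hi; omega
          · rw [pval, Finset.sum_singleton, phim1, phim2]; push_cast; ring
        · refine ⟨{1}, ?_, ?_, ?_⟩
          · intro i hi; simp at hi; subst hi; simp
          · intro i hi; simp at hi; omega
          · rw [pval, Finset.sum_singleton, phip1, phim2]; push_cast; ring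
    | (k+2) =>
      obtain ⟨E1, O1⟩ := ih (k+1) (by omega)
      obtain ⟨E0, O0⟩ := ih k (by omega)
      set K : ℤ := (k : ℤ) with hK
      have hL5 : Lucas (2*k+5) = Lucas (2*k+4) + Lucas (2*k+3) := by
        rw [show 2*k+5 = (2*k+3)+2 by ring]; rfl
      have hL4 : Lucas (2*k+4) = Lucas (2*k+3) + Lucas (2*k+2) := by
        rw [show 2*k+4 = (2*k+2)+2 by ring]; rfl
      have hL3 : Lucas (2*k+3) = Lucas (2*k+2) + Lucas (2*k+1) := by
        rw [show 2*k+3 = (2*k+1)+2 by ring]; rfl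
      have hLo3 : (Lucas (2*k+3) : ℝ) = phi ^ (2*K+3) - phi ^ (-(2*K+3)) := by
        have := lucas_odd' (k+1) (2*K+3) (by push_cast; ring)
        rw [show 2*(k+1)+1 = 2*k+3 by ring] at this; exact this
      have hLe2 : (Lucas (2*k+2) : ℝ) = phi ^ (2*K+2) + phi ^ (-(2*K+2)) := by
        have := lucas_even' (k+1) (2*K+2) (by push_cast; ring)
        rw [show 2*(k+1) = 2*k+2 by ring] at this; exact this
      have hLe4 : (Lucas (2*k+4) : ℝ) = phi ^ (2*K+4) + phi ^ (-(2*K+4)) := by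
        have := lucas_even' (k+2) (2*K+4) (by push_cast; ring)
        rw [show 2*(k+2) = 2*k+4 by ring] at this; exact this
      have r4 := phi_zrec' (-(2*K+4)) (-(2*K+3)) (-(2*K+2)) (by ring) (by ring)
      constructor
      · -- EStmt (k+2)
        intro M hM a ha
        have ha' : a = 2*K+4 := by rw [ha]; push_cast; ring
        subst ha'
        rw [show 2*(k+2)+1 = 2*k+5 by ring] at hM
        rcases le_or_gt M (Lucas (2*k+3)) with hc1 | hc1
        · -- c1 : use E1
          obtain ⟨S, hg, hb, hv⟩ := E1 M hc1 (2*K+2) (by push_cast; ring)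
          exact ⟨S, hg, fun i hi => by have := hb i hi; omega, hv⟩
        · rcases lt_or_ge M (Lucas (2*k+4)) with hc2 | hc2
          · -- c2 : odd style
            set M' := M - Lucas (2*k+3) with hM'
            have hM'1 : 1 ≤ M' := by omega
            have hM'2 : M' < Lucas (2*k+2) := by omega
            obtain ⟨S', hg', hb', hv'⟩ := O1 M' hM'1 (by rw [show 2*(k+1) = 2*k+2 by ring]; exact hM'2) (2*K+2) (by push_cast; ring)
            have hb'' : ∀ i ∈ S', -(2*K+2)+1 ≤ i ∧ i ≤ 2*K+2-1 := hb'
            obtain ⟨hg2, hv2⟩ := insert_lo S' hg' (-(2*K+2)+1) (-(2*K+4)) (fun i hi => (hb'' i hi).1) (by omega)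
            obtain ⟨hg3, hv3⟩ := insert_hi _ hg2 (2*K+2-1) (2*K+3)
              (by intro i hi; rcases Finset.mem_insert.mp hi with rfl | h
                  · omega
                  · exact (hb'' i h).2) (by omega)
            refine ⟨_, hg3, ?_, ?_⟩
            · intro i hi
              rcases Finset.mem_insert.mp hi with rfl | h
              · omega
              · rcases Finset.mem_insert.mp h with rfl | h'
                · omega
                · have := hb'' i h'; omega
            · rw [hv3, hv2, hv']
              have hMc : (M : ℝ) = (Lucas (2*k+3) : ℝ) + (M' : ℝ) := by
                have : M = Lucas (2*k+3) + M' := by omega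
                rw [this]; push_cast; ring
              rw [hMc, hLo3]; linarith [r4]
          · -- c3 : even style
            set M'' := M - Lucas (2*k+4) with hM''
            have hM''2 : M'' ≤ Lucas (2*k+3) := by omega
            obtain ⟨S'', hg', hb', hv'⟩ := E1 M'' (by rw [show 2*(k+1)+1 = 2*k+3 by ring]; exact hM''2) (2*K+2) (by push_cast; ring)
            obtain ⟨hg2, hv2⟩ := insert_lo S'' hg' (-(2*K+2)) (-(2*K+4)) (fun i hi => (hb' i hi).1) (by omega)
            obtain ⟨hg3, hv3⟩ := insert_hi _ hg2 (2*K+2) (2*K+4)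
              (by intro i hi; rcases Finset.mem_insert.mp hi with rfl | h
                  · omega
                  · exact (hb' i h).2) (by omega)
            refine ⟨_, hg3, ?_, ?_⟩
            · intro i hi
              rcases Finset.mem_insert.mp hi with rfl | h
              · omega
              · rcases Finset.mem_insert.mp h with rfl | h'
                · omega
                · have := hb' i h'; omega
            · rw [hv3, hv2, hv']
              have hMc : (M : ℝ) = (Lucas (2*k+4) : ℝ) + (M'' : ℝ) := by
                have : M = Lucas (2*k+4) + M'' := by omega
                rw [this]; push_cast; ring
              rw [hMc, hLe4]; ring
      · -- OStmt (k+2)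
        intro M h1 h2 a ha
        have ha' : a = 2*K+4 := by rw [ha]; push_cast; ring
        subst ha'
        rw [show 2*(k+2) = 2*k+4 by ring] at h2
        rcases lt_or_ge M (Lucas (2*k+2)) with hc1 | hc1
        · -- c1 : pad
          obtain ⟨S', hg', hb', hv'⟩ := O1 M h1 (by rw [show 2*(k+1) = 2*k+2 by ring]; exact hc1) (2*K+2) (by push_cast; ring)
          obtain ⟨hg2, hv2⟩ := insert_lo S' hg' (-(2*K+2)+1) (-(2*K+3)) (fun i hi => (hb' i hi).1) (by omega)
          refine ⟨_, hg2, ?_, ?_⟩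
          · intro i hi
            rcases Finset.mem_insert.mp hi with rfl | h
            · omega
            · have := hb' i h; omega
          · rw [hv2, hv']; linarith [r4]
        · rcases le_or_gt M (Lucas (2*k+3)) with hc2 | hc2
          · -- c2 : even style inside O
            set M'' := M - Lucas (2*k+2) with hM''
            have hM''2 : M'' ≤ Lucas (2*k+1) := by omega
            obtain ⟨S'', hg', hb', hv'⟩ := E0 M'' (by rw [show 2*k+1 = 2*k+1 by ring]; exact hM''2) (2*K) (by push_cast; ring)
            obtain ⟨hg2, hv2⟩ := insert_lo S'' hg' (-(2*K)) (-(2*K+3)) (fun i hi => (hb' i hi).1) (by omega)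
            obtain ⟨hg3, hv3⟩ := insert_hi _ hg2 (2*K) (2*K+2)
              (by intro i hi; rcases Finset.mem_insert.mp hi with rfl | h
                  · omega
                  · exact (hb' i h).2) (by omega)
            refine ⟨_, hg3, ?_, ?_⟩
            · intro i hi
              rcases Finset.mem_insert.mp hi with rfl | h
              · omega
              · rcases Finset.mem_insert.mp h with rfl | h'
                · omega
                · have := hb' i h'; omega
            · rw [hv3, hv2, hv']
              have hMc : (M : ℝ) = (Lucas (2*k+2) : ℝ) + (M'' : ℝ) := by
                have : M = Lucas (2*k+2) + M'' := by omega
                rw [this]; push_cast; ring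
              rw [hMc, hLe2]; linarith [r4]
          · -- c3 : odd style inside O
            set M' := M - Lucas (2*k+3) with hM'
            have hM'1 : 1 ≤ M' := by omega
            have hM'2 : M' < Lucas (2*k+2) := by omega
            obtain ⟨S', hg', hb', hv'⟩ := O1 M' hM'1 (by rw [show 2*(k+1) = 2*k+2 by ring]; exact hM'2) (2*K+2) (by push_cast; ring)
            obtain ⟨hg2, hv2⟩ := insert_hi S' hg' (2*K+2-1) (2*K+3) (fun i hi => (hb' i hi).2) (by omega)
            refine ⟨_, hg2, ?_, ?_⟩
            · intro i hi
              rcases Finset.mem_insert.mp hi with rfl | h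
              · omega
              · have := hb' i h; omega
            · rw [hv2, hv']
              have hMc : (M : ℝ) = (Lucas (2*k+3) : ℝ) + (M' : ℝ) := by
                have : M = Lucas (2*k+3) + M' := by omega
                rw [this]; push_cast; ring
              rw [hMc, hLo3]; linarith [r4]

lemma lucas_pos (n : ℕ) : 1 ≤ Lucas n := by
  induction n using Nat.strong_induction_on with
  | _ n ih =>
    match n with
    | 0 => norm_num [Lucas]
    | 1 => norm_num [Lucas]
    | n + 2 =>
      have h1 := ih (n+1) (by omega)
      have h2 : Lucas (n+2) = Lucas (n+1) + Lucas n := rfl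
      rw [h2]; omega

lemma lucas_ge (n : ℕ) : n ≤ Lucas n := by
  induction n using Nat.strong_induction_on with
  | _ n ih =>
    match n with
    | 0 => norm_num [Lucas]
    | 1 => norm_num [Lucas]
    | n + 2 =>
      have h1 := ih (n+1) (by omega)
      have h0 := ih n (by omega)
      have hp := lucas_pos n
      have h2 : Lucas (n+2) = Lucas (n+1) + Lucas n := rfl
      rw [h2]; linarith

lemma exists_rep (N : ℕ) : ∃ S : Finset ℤ, Good S ∧ pval S = N := by
  obtain ⟨S, hg, _, hv⟩ := (EO N).1 N (le_trans (by omega) (lucas_ge (2*N+1))) (2*N : ℤ) (by push_cast; ring)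
  exact ⟨S, hg, hv⟩

lemma key_s2 (N : ℕ) (d d' : ℤ → ℕ) (hd : IsBasePhi N d) (hd' : IsBasePhi N d') (k : ℤ)
    (hk : ∀ i, k < i → d i = d' i) (hlt : d' k < d k) : False := by
  obtain ⟨hf, hle, hadj, hsum⟩ := hd
  obtain ⟨hf', hle', hadj', hsum'⟩ := hd'
  have hdk : d k = 1 := by have := hle k; omega
  have hdk' : d' k = 0 := by omega
  set T : Finset ℤ := hf.toFinset ∪ hf'.toFinset with hT
  have hmemT : ∀ i : ℤ, i ∉ T → d i = 0 ∧ d' i = 0 := by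
    intro i hi
    simp only [hT, Finset.mem_union, Set.Finite.mem_toFinset, Set.mem_setOf_eq] at hi
    push_neg at hi
    exact ⟨by simpa using hi.1, by simpa using hi.2⟩
  have hA : ∑ i ∈ T, (d i : ℝ) * phi ^ i = (N : ℝ) := by
    rw [← hsum]
    exact (tsum_eq_sum (fun b hb => by rw [(hmemT b hb).1]; simp)).symm
  have hA' : ∑ i ∈ T, (d' i : ℝ) * phi ^ i = (N : ℝ) := by
    rw [← hsum']
    exact (tsum_eq_sum (fun b hb => by rw [(hmemT b hb).2]; simp)).symm
  set g : ℤ → ℝ := fun i => ((d' i : ℝ) - (d i : ℝ)) * phi ^ i with hg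
  have hTg : ∑ i ∈ T, g i = 0 := by
    have : ∑ i ∈ T, g i = ∑ i ∈ T, (d' i : ℝ) * phi ^ i - ∑ i ∈ T, (d i : ℝ) * phi ^ i := by
      rw [← Finset.sum_sub_distrib]
      exact Finset.sum_congr rfl (fun i _ => by rw [hg]; ring)
    rw [this, hA, hA']; ring
  have hsplit := Finset.sum_filter_add_sum_filter_not T (fun i => k < i) g
  have hhi : ∑ i ∈ T.filter (fun i => k < i), g i = 0 := by
    apply Finset.sum_eq_zero
    intro i hi
    have := hk i (Finset.mem_filter.mp hi).2
    rw [hg]; simp only [this]; ring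
  set T2 := T.filter (fun i => ¬ k < i) with hT2
  have hT2g : ∑ i ∈ T2, g i = 0 := by
    rw [hhi] at hsplit
    rw [← hsplit] at hTg
    linarith [hTg]
  have hkT2 : k ∈ T2 := by
    rw [hT2]
    refine Finset.mem_filter.mpr ⟨?_, by omega⟩
    rw [hT]
    apply Finset.mem_union_left
    rw [Set.Finite.mem_toFinset]
    simp [hdk]
  have herase := Finset.sum_erase_add T2 g hkT2
  have hgk : g k = -phi ^ k := by rw [hg]; simp [hdk, hdk']
  set R := T2.erase k with hR
  have hRg : ∑ i ∈ R, g i = phi ^ k := by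
    rw [hT2g, hgk] at herase; linarith
  set S' := R.filter (fun i => d' i = 1) with hS'
  have hbound : ∑ i ∈ R, g i ≤ ∑ i ∈ S', phi ^ i := by
    rw [hS', Finset.sum_filter]
    apply Finset.sum_le_sum
    intro i _
    by_cases hdi : d' i = 1
    · rw [if_pos hdi]
      show ((d' i : ℝ) - (d i : ℝ)) * phi ^ i ≤ phi ^ i
      have : (0:ℝ) ≤ (d i : ℝ) := Nat.cast_nonneg _
      have hp := zpow_phi_pos i
      rw [hdi]
      push_cast
      nlinarith
    · have h0 : d' i = 0 := by have := hle' i; omega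
      rw [if_neg hdi]
      show ((d' i : ℝ) - (d i : ℝ)) * phi ^ i ≤ 0
      have : (0:ℝ) ≤ (d i : ℝ) := Nat.cast_nonneg _
      have hp := zpow_phi_pos i
      rw [h0]
      push_cast
      nlinarith
  have hgood : Good S' := by
    intro i hi hci
    have h1 : d' i = 1 := (Finset.mem_filter.mp hi).2
    have h2 : d' (i+1) = 1 := (Finset.mem_filter.mp hci).2
    have h3 := hadj' i
    rw [h1, h2] at h3
    omega
  have hub : ∀ i ∈ S', i ≤ k - 1 := by
    intro i hi
    have h1 := (Finset.mem_filter.mp hi).1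
    have h2 : i ∈ T2 := Finset.mem_of_mem_erase h1
    have h3 : i ≠ k := Finset.ne_of_mem_erase h1
    have h4 : ¬ k < i := (Finset.mem_filter.mp h2).2
    omega
  have hlt2 := pval_lt S' hgood (k-1) hub
  rw [show k - 1 + 1 = k by ring] at hlt2
  rw [pval] at hlt2
  linarith [hRg, hbound, hlt2]

/-- Every natural number has exactly one base-phi expansion. -/
theorem basePhi_existsUnique (N : ℕ) : ∃! d : ℤ → ℕ, IsBasePhi N d := by
  obtain ⟨S, hgS, hvS⟩ := exists_rep N
  set d : ℤ → ℕ := fun i => if i ∈ S then 1 else 0 with hd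
  have hdval : ∀ i, i ∈ S → d i = 1 := fun i hi => by simp [hd, hi]
  have hdval' : ∀ i, i ∉ S → d i = 0 := fun i hi => by simp [hd, hi]
  have hbp : IsBasePhi N d := by
    refine ⟨?_, ?_, ?_, ?_⟩
    · apply Set.Finite.subset S.finite_toSet
      intro i hi
      simp only [Set.mem_setOf_eq] at hi
      by_contra hc
      exact hi (hdval' i hc)
    · intro i
      by_cases hi : i ∈ S
      · rw [hdval i hi]
      · rw [hdval' i hi]; omega
    · intro i
      by_cases hi : i ∈ S
      · rw [hdval' (i+1) (hgS i hi)]; ring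
      · rw [hdval' i hi]; ring
    · have h1 : ∑' i : ℤ, (d i : ℝ) * phi ^ i = ∑ i ∈ S, (d i : ℝ) * phi ^ i :=
        tsum_eq_sum (fun b hb => by rw [hdval' b hb]; simp)
      rw [h1]
      rw [← hvS, pval]
      exact Finset.sum_congr rfl (fun i hi => by rw [hdval i hi]; simp)
  have huniq : ∀ e e' : ℤ → ℕ, IsBasePhi N e → IsBasePhi N e' → e = e' := by
    intro e e' he he'
    by_contra hne
    have hDfin : {i : ℤ | e i ≠ e' i}.Finite := by
      apply Set.Finite.subset (he.1.union he'.1)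
      intro i hi
      simp only [Set.mem_setOf_eq, Set.mem_union] at hi ⊢
      omega
    have hDne : {i : ℤ | e i ≠ e' i}.Nonempty := by
      obtain ⟨i, hi⟩ := Function.ne_iff.mp hne
      exact ⟨i, hi⟩
    have hFne : hDfin.toFinset.Nonempty := by
      rwa [Set.Finite.toFinset_nonempty]
    set k := hDfin.toFinset.max' hFne with hkdef
    have hk : ∀ i, k < i → e i = e' i := by
      intro i hi
      by_contra hc
      have h1 : i ∈ hDfin.toFinset := (Set.Finite.mem_toFinset _).mpr hc
      have := hDfin.toFinset.le_max' i h1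
      omega
    have hkD : e k ≠ e' k :=
      (Set.Finite.mem_toFinset _).mp (hDfin.toFinset.max'_mem hFne)
    rcases lt_trichotomy (e' k) (e k) with h | h | h
    · exact (key_s2 N e e' he he' k hk h).elim
    · exact hkD h.symm
    · exact key_s2 N e' e he' he k (fun i hi => (hk i hi).symm) h
  exact ⟨d, hbp, fun d' hd' => huniq d' d hd' hbp⟩
end
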